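/- Let L ⊆ ℤⁿ be a zonotopal lattice. Then every vector of L can be written as a finite sum of pairwise conformal elementary vectors of L. -/
import Mathlib


/-- The support of an integer vector: the set of its nonzero coordinates. -/
def supp {n : ℕ} (v : Fin n → ℤ) : Set (Fin n) := {i | v i ≠ 0}

/-- `v` is an elementary vector of the lattice `L ⊆ ℤⁿ`: it is a nonzero lattice
vector with entries in `{-1,0,+1}` whose support is minimal among supports of
nonzero lattice vectors. -/
def IsElementary {n : ℕ} (L : AddSubgroup (Fin n → ℤ)) (v : Fin n → ℤ) : Prop :=
  v ∈ L ∧ v ≠ 0 ∧ (∀ i, v i = -1 ∨ v i = 0 ∨ v i = 1) ∧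
    ∀ u ∈ L, u ≠ 0 → ¬ (supp u ⊂ supp v)

/-- A lattice `L ⊆ ℤⁿ` is zonotopal if every nonzero lattice vector's support
contains the support of some elementary vector. -/
def IsZonotopal {n : ℕ} (L : AddSubgroup (Fin n → ℤ)) : Prop :=
  ∀ v ∈ L, v ≠ 0 → ∃ u, IsElementary L u ∧ supp u ⊆ supp v

/-- The weighted inner product on `ℝⁿ` with weights `lam`. -/
def wip {n : ℕ} (lam : Fin n → ℝ) (x y : Fin n → ℝ) : ℝ := ∑ i, lam i * x i * y i

/-- Coordinatewise cast of an integer vector to a real vector. -/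
def icast {n : ℕ} (v : Fin n → ℤ) : Fin n → ℝ := fun i => (v i : ℝ)

/-- The real span `F` of a lattice `L ⊆ ℤⁿ`. -/
def latticeSpan {n : ℕ} (L : AddSubgroup (Fin n → ℤ)) : Submodule ℝ (Fin n → ℝ) :=
  Submodule.span ℝ (icast '' (L : Set (Fin n → ℤ)))

/-- The Dirichlet-Voronoi polytope of a lattice `L ⊆ ℤⁿ` with respect to the
weighted inner product with weights `lam`. -/
def DV {n : ℕ} (L : AddSubgroup (Fin n → ℤ)) (lam : Fin n → ℝ) : Set (Fin n → ℝ) :=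
  {x | x ∈ latticeSpan L ∧
    ∀ v ∈ L, wip lam x (icast v) ≤ wip lam (icast v) (icast v) / 2}

/-- `v` is a strict Voronoi vector of `L` with respect to the weighted inner
product with weights `lam`: `±v` are the unique shortest vectors of `v + 2L`. -/
def IsStrictVoronoi {n : ℕ} (L : AddSubgroup (Fin n → ℤ)) (lam : Fin n → ℝ)
    (v : Fin n → ℤ) : Prop :=
  v ∈ L ∧ v ≠ 0 ∧ ∀ w ∈ L, v + 2 • w ≠ v → v + 2 • w ≠ -v →
    wip lam (icast v) (icast v) <
      wip lam (icast (v + 2 • w)) (icast (v + 2 • w))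

/-- Two integer vectors are conformal if their entries never have opposite signs. -/
def IsConformal {n : ℕ} (v w : Fin n → ℤ) : Prop := ∀ i, 0 ≤ v i * w i

/-- The sign of a real number, as an integer in `{-1,0,+1}`. -/
noncomputable def sgnR (t : ℝ) : ℤ := if 0 < t then 1 else if t < 0 then -1 else 0

/-- A covector of the vector configuration `X`: the sign vector of the values of a
linear functional on the configuration. -/
def IsCovector {n d : ℕ} (X : Fin n → Fin d → ℝ) (s : Fin n → ℤ) : Prop :=
  ∃ f : (Fin d → ℝ) →ₗ[ℝ] ℝ, ∀ i, s i = sgnR (f (X i))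

/-- A cocircuit of the vector configuration `X`: a nonzero covector of minimal support. -/
def IsCocircuit {n d : ℕ} (X : Fin n → Fin d → ℝ) (s : Fin n → ℤ) : Prop :=
  IsCovector X s ∧ s ≠ 0 ∧ ∀ t, IsCovector X t → t ≠ 0 → ¬ (supp t ⊂ supp s)

/-- The lattice in `ℤⁿ` generated by the cocircuits of `X`. -/
def cocircuitLattice {n d : ℕ} (X : Fin n → Fin d → ℝ) : AddSubgroup (Fin n → ℤ) :=
  AddSubgroup.closure {s | IsCocircuit X s}

/-- A linear subspace of `ℝ^d` spanned by a subset of the configuration `X`. -/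
def SpannedSubspace {n d : ℕ} (X : Fin n → Fin d → ℝ)
    (W : Submodule ℝ (Fin d → ℝ)) : Prop :=
  ∃ S : Set (Fin n), W = Submodule.span ℝ (X '' S)

/-- McMullen's condition (II): every `(d-2)`-dimensional subspace spanned by vectors
of `X` is contained in exactly `2` or `3` hyperplanes spanned by vectors of `X`. -/
def ConditionII {n d : ℕ} (X : Fin n → Fin d → ℝ) : Prop :=
  ∀ W : Submodule ℝ (Fin d → ℝ), SpannedSubspace X W → Module.finrank ℝ W = d - 2 →
    {H : Submodule ℝ (Fin d → ℝ) |
        SpannedSubspace X H ∧ Module.finrank ℝ H = d - 1 ∧ W ≤ H}.ncard = 2 ∨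
    {H : Submodule ℝ (Fin d → ℝ) |
        SpannedSubspace X H ∧ Module.finrank ℝ H = d - 1 ∧ W ≤ H}.ncard = 3

/-- The zonotope generated by the vector configuration `X`, i.e. the Minkowski sum
of the segments `conv{xᵢ, -xᵢ}`. -/
def zonotope {n d : ℕ} (X : Fin n → Fin d → ℝ) : Set (Fin d → ℝ) :=
  {z | ∃ c : Fin n → ℝ, (∀ i, |c i| ≤ 1) ∧ z = ∑ i, c i • X i}

/-- `P` tiles `ℝ^d` face-to-face by translations: some family of translates of `P`
covers `ℝ^d`, and any two distinct translates intersect in a common (possibly empty)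
exposed face. -/
def TilesFaceToFace {d : ℕ} (P : Set (Fin d → ℝ)) : Prop :=
  ∃ T : Set (Fin d → ℝ),
    (∀ x, ∃ t ∈ T, x ∈ (t + ·) '' P) ∧
    ∀ s ∈ T, ∀ t ∈ T, s ≠ t →
      IsExposed ℝ ((s + ·) '' P) (((s + ·) '' P) ∩ ((t + ·) '' P)) ∧
      IsExposed ℝ ((t + ·) '' P) (((s + ·) '' P) ∩ ((t + ·) '' P))

lemma supp_neg' {n : ℕ} (v : Fin n → ℤ) : supp (-v) = supp v := by
  ext i; simp [supp]

lemma IsElementary.neg' {n : ℕ} {L : AddSubgroup (Fin n → ℤ)} {u : Fin n → ℤ}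
    (h : IsElementary L u) : IsElementary L (-u) := by
  obtain ⟨h1, h2, h3, h4⟩ := h
  refine ⟨neg_mem h1, neg_ne_zero.mpr h2, fun i => ?_, fun z hz hz0 => ?_⟩
  · have := h3 i; simp only [Pi.neg_apply]; omega
  · rw [supp_neg']; exact h4 z hz hz0

lemma exists_conformal_elem {n : ℕ} {L : AddSubgroup (Fin n → ℤ)} (hL : IsZonotopal L) :
    ∀ N : ℕ, ∀ v ∈ L, v ≠ 0 →
      (Finset.univ.filter (fun i => v i ≠ 0)).card ≤ N →
      ∃ u, IsElementary L u ∧ (∀ i, u i ≠ 0 → v i ≠ 0) ∧ ∀ i, 0 ≤ v i * u i := by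
  intro N
  induction N with
  | zero =>
    intro v _ hv0 hcard
    exfalso; apply hv0; funext i
    simp only [Pi.zero_apply]
    by_contra h
    have hi : i ∈ Finset.univ.filter (fun i => v i ≠ 0) := by simp [h]
    rw [Nat.le_zero, Finset.card_eq_zero] at hcard
    simp [hcard] at hi
  | succ N ih =>
    intro v hv hv0 hcard
    obtain ⟨u0, hu0, hsupp⟩ := hL v hv hv0
    have hs : ∀ i, u0 i ≠ 0 → v i ≠ 0 := fun i hi => hsupp hi
    by_cases hc : ∀ i, 0 ≤ v i * u0 i
    · exact ⟨u0, hu0, hs, hc⟩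
    by_cases hc' : ∀ i, 0 ≤ v i * (-u0) i
    · exact ⟨-u0, hu0.neg', fun i hi => hs i (by simpa using hi),  hc'⟩
    push_neg at hc hc'
    obtain ⟨iD, hiD⟩ := hc
    obtain ⟨iA, hiA'⟩ := hc'
    have hiA : 0 < v iA * u0 iA := by
      have : v iA * (-u0) iA = -(v iA * u0 iA) := by simp
      rw [this] at hiA'; omega
    set A : Finset (Fin n) := Finset.univ.filter (fun i => 0 < v i * u0 i) with hAdef
    have hAne : A.Nonempty := ⟨iA, by simp [hAdef, hiA]⟩
    obtain ⟨i0, hi0A, hmin⟩ := A.exists_min_image (fun i => (v i).natAbs) hAne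
    have hi0 : 0 < v i0 * u0 i0 := by
      simpa [hAdef] using hi0A
    have hmin' : ∀ i, 0 < v i * u0 i → (v i0).natAbs ≤ (v i).natAbs := by
      intro i hi; exact hmin i (by simp [hAdef, hi])
    -- the new vector w
    set w : Fin n → ℤ := fun i => v i - ((v i0).natAbs : ℤ) * u0 i with hwdef
    have hwL : w ∈ L := by
      have hEq : w = v - ((v i0).natAbs : ℤ) • u0 := by
        funext i; simp [hwdef, smul_eq_mul]
      rw [hEq]; exact sub_mem hv (zsmul_mem hu0.1 _)
    have hwne : w ≠ 0 := by
      intro h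
      have hwiD : w iD = 0 := by rw [h]; rfl
      rcases hu0.2.2.1 iD with h1 | h1 | h1 <;>
        simp only [hwdef, h1, mul_neg_one, mul_one, mul_zero] at hwiD hiD <;> omega
    have hconf : ∀ i, 0 ≤ v i * w i := by
      intro i
      rcases hu0.2.2.1 i with h1 | h1 | h1 <;>
        simp only [hwdef, h1, mul_neg_one, mul_one, mul_zero, sub_zero, sub_neg_eq_add]
      · rcases le_or_gt 0 (v i) with h | h
        · have : (0:ℤ) ≤ ((v i0).natAbs : ℤ) := by positivity
          nlinarith
        · have hA : 0 < v i * u0 i := by rw [h1]; omega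
          have := hmin' i hA
          have h2 : v i + ((v i0).natAbs : ℤ) ≤ 0 := by omega
          nlinarith
      · exact mul_self_nonneg _
      · rcases le_or_gt (v i) 0 with h | h
        · have : (0:ℤ) ≤ ((v i0).natAbs : ℤ) := by positivity
          nlinarith
        · have hA : 0 < v i * u0 i := by rw [h1]; omega
          have := hmin' i hA
          have h2 : 0 ≤ v i - ((v i0).natAbs : ℤ) := by omega
          nlinarith
    have hwsupp : ∀ i, w i ≠ 0 → v i ≠ 0 := by
      intro i hwi hvi
      have hu0i : u0 i = 0 := by
        by_contra h; exact hs i h hvi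
      apply hwi; simp [hwdef, hu0i, hvi]
    have hwi0 : w i0 = 0 := by
      rcases hu0.2.2.1 i0 with h1 | h1 | h1 <;>
        simp only [hwdef, h1, mul_neg_one, mul_one, mul_zero] at hi0 ⊢ <;> omega
    have hvi0 : v i0 ≠ 0 := by intro h; rw [h] at hi0; omega
    have hcard' : (Finset.univ.filter (fun i => w i ≠ 0)).card ≤ N := by
      have hsub : (Finset.univ.filter (fun i => w i ≠ 0)) ⊆
          (Finset.univ.filter (fun i => v i ≠ 0)) := by
        intro i hi
        simp only [Finset.mem_filter, Finset.mem_univ, true_and] at hi ⊢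
        exact hwsupp i hi
      have hss : (Finset.univ.filter (fun i => w i ≠ 0)) ⊂
          (Finset.univ.filter (fun i => v i ≠ 0)) := by
        rw [Finset.ssubset_iff_of_subset hsub]
        exact ⟨i0, by simp [hvi0], by simp [hwi0]⟩
      have := Finset.card_lt_card hss
      omega
    obtain ⟨u, hu, hus, huc⟩ := ih w hwL hwne hcard'
    refine ⟨u, hu, fun i hi => hwsupp i (hus i hi), fun i => ?_⟩
    by_cases hui : u i = 0
    · simp [hui]
    have hwi : w i ≠ 0 := hus i hui
    have hvi : v i ≠ 0 := hwsupp i hwi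
    have h1 : 0 < v i * w i := lt_of_le_of_ne (hconf i) (Ne.symm (mul_ne_zero hvi hwi))
    have h2 : 0 < w i * u i := lt_of_le_of_ne (huc i) (Ne.symm (mul_ne_zero hwi hui))
    nlinarith [mul_pos h1 h2, sq_nonneg (w i)]

lemma decomp_aux {n : ℕ} {L : AddSubgroup (Fin n → ℤ)} (hL : IsZonotopal L) :
    ∀ N : ℕ, ∀ v ∈ L, (∑ i, (v i).natAbs) ≤ N →
      ∃ (m : ℕ) (w : Fin m → (Fin n → ℤ)),
        (∀ k, IsElementary L (w k)) ∧
        (∀ k i, w k i ≠ 0 → v i ≠ 0) ∧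
        (∀ k i, 0 ≤ v i * w k i) ∧ v = ∑ k, w k := by
  intro N
  induction N with
  | zero =>
    intro v _ hsum
    have hv0 : v = 0 := by
      funext i
      simp only [Pi.zero_apply]
      have h2 : (v i).natAbs ≤ ∑ j, (v j).natAbs :=
        Finset.single_le_sum (f := fun j => (v j).natAbs)
          (fun j _ => Nat.zero_le _) (Finset.mem_univ i)
      omega
    exact ⟨0, Fin.elim0, fun k => k.elim0, fun k => k.elim0, fun k => k.elim0,
      by rw [hv0]; simp⟩
  | succ N ih =>
    intro v hv hsum
    by_cases hv0 : v = 0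
    · exact ⟨0, Fin.elim0, fun k => k.elim0, fun k => k.elim0, fun k => k.elim0,
        by rw [hv0]; simp⟩
    obtain ⟨u, hu, hus, huc⟩ := exists_conformal_elem hL
      ((Finset.univ.filter (fun i => v i ≠ 0)).card) v hv hv0 le_rfl
    have hv'L : v - u ∈ L := sub_mem hv hu.1
    have hkey : ∀ i, u i ≠ 0 → (v i - u i).natAbs < (v i).natAbs := by
      intro i hui
      have hvi := hus i hui
      have hvc := huc i
      rcases hu.2.2.1 i with h1 | h1 | h1 <;>
        simp only [h1, mul_neg_one, mul_one] at hvc hui ⊢ <;> omega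
    have hle : ∀ i, (v i - u i).natAbs ≤ (v i).natAbs := by
      intro i
      by_cases hui : u i = 0
      · simp [hui]
      · exact (hkey i hui).le
    obtain ⟨iu, hiu⟩ : ∃ i, u i ≠ 0 := by
      by_contra h; push_neg at h; exact hu.2.1 (funext h)
    have hsum' : (∑ i, ((v - u) i).natAbs) ≤ N := by
      have hlt : (∑ i, (v i - u i).natAbs) < ∑ i, (v i).natAbs :=
        Finset.sum_lt_sum (fun i _ => hle i) ⟨iu, Finset.mem_univ iu, hkey iu hiu⟩
      have : ∀ i, (v - u) i = v i - u i := fun i => rfl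
      simp only [this]
      omega
    have hv'supp : ∀ i, (v - u) i ≠ 0 → v i ≠ 0 := by
      intro i hi hvi
      have hui : u i = 0 := by by_contra h; exact (hus i h) hvi
      exact hi (by simp [Pi.sub_apply, hvi, hui])
    have hv'conf : ∀ i, 0 ≤ v i * (v - u) i := by
      intro i
      have hvu : (v - u) i = v i - u i := rfl
      rw [hvu]
      by_cases hui : u i = 0
      · simp [hui, mul_self_nonneg]
      have hvi := hus i hui
      have hvc := huc i
      rcases hu.2.2.1 i with h1 | h1 | h1 <;>
        simp only [h1, mul_neg_one, mul_one] at hvc hui ⊢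
      · have hb : v i ≤ -1 := by omega
        nlinarith
      · exact absurd trivial hui
      · have hb : 1 ≤ v i := by omega
        nlinarith
    obtain ⟨m, w', h1, h2, h3, h4⟩ := ih (v - u) hv'L hsum'
    refine ⟨m + 1, Fin.cons u w', ?_, ?_, ?_, ?_⟩
    · intro k
      refine Fin.cases ?_ ?_ k
      · simpa using hu
      · intro j; simpa using h1 j
    · intro k
      refine Fin.cases ?_ ?_ k
      · intro i hi
        simp only [Fin.cons_zero] at hi
        exact hus i hi
      · intro j i hi
        simp only [Fin.cons_succ] at hi
        exact hv'supp i (h2 j i hi)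
    · intro k
      refine Fin.cases ?_ ?_ k
      · intro i; simpa using huc i
      · intro j i
        simp only [Fin.cons_succ]
        by_cases hwi : w' j i = 0
        · simp [hwi]
        have hv'i : (v - u) i ≠ 0 := h2 j i hwi
        have hvi : v i ≠ 0 := hv'supp i hv'i
        have p1 : 0 < v i * (v - u) i :=
          lt_of_le_of_ne (hv'conf i) (Ne.symm (mul_ne_zero hvi hv'i))
        have p2 : 0 < (v - u) i * w' j i :=
          lt_of_le_of_ne (h3 j i) (Ne.symm (mul_ne_zero hv'i hwi))
        nlinarith [mul_pos p1 p2, sq_nonneg ((v - u) i)]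
    · rw [Fin.sum_cons, ← h4]; abel

/-- Every vector of a zonotopal lattice is a finite sum of pairwise
conformal elementary vectors. -/
theorem eq_sum_conformal_elementary {n : ℕ} (L : AddSubgroup (Fin n → ℤ))
    (hL : IsZonotopal L) (v : Fin n → ℤ) (hv : v ∈ L) :
    ∃ (m : ℕ) (w : Fin m → (Fin n → ℤ)),
      (∀ k, IsElementary L (w k)) ∧
      (∀ k l, k ≠ l → IsConformal (w k) (w l)) ∧
      v = ∑ k, w k := by 
  obtain ⟨m, w, h1, h2, h3, h4⟩ := decomp_aux hL (∑ i, (v i).natAbs) v hv le_rfl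
  refine ⟨m, w, h1, ?_, h4⟩
  intro k l _ i
  by_cases hvi : v i = 0
  · have hk : w k i = 0 := by by_contra h; exact h2 k i h hvi
    simp [hk]
  · nlinarith [h3 k i, h3 l i, mul_self_pos.mpr hvi,
      mul_nonneg (h3 k i) (h3 l i)]
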